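/- arXiv:2110.08141 — 5 statements merged into one kernel-verified Lean document; each statement's English description precedes it below -/
import Mathlib

section
/- Let V be a finite type, let θ : V → ℝ, and let B, f̄ : V → V → ℝ with B u v > 0 for every edge used below. Suppose P is a path from vertex i to vertex j in a simple graph on V such that for every edge (u,v) traversed by P there is a flow value f u v with f u v = B u v * (θ u − θ v) and |f u v| ≤ f̄ u v. Then for any constant B_ij > 0, one has |B_ij * (θ i − θ j)| ≤ B_ij * Σ over the edges (u,v) of P of (f̄ u v / B u v). In particular M_ij := B_ij * Σ_{(u,v)∈P} f̄ u v / B u v is a valid big-M value for the pair (i,j): the linearized switching constraint |f_ij − B_ij(θ i − θ j)| ≤ M_ij is satisfied whenever f_ij = 0. -/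

private lemma walk_telescope {V : Type*} {G : SimpleGraph V} (θ : V → ℝ) :
    ∀ {i j : V} (P : G.Walk i j),
      (P.darts.map (fun d => θ d.toProd.1 - θ d.toProd.2)).sum = θ i - θ j := by
  intro i j P
  induction P with
  | nil => simp
  | cons h p ih => simp [ih]

/-- Proposition 2 of the paper. If `P` is a path from `i` to `j` in a
simple graph on a finite vertex type `V`, and every edge `(u,v)` traversed by `P` carries a
flow `f u v` satisfying Ohm's law `f u v = B u v * (θ u - θ v)` and the capacity bound
`|f u v| ≤ f̄ u v` (with `B u v > 0` on those edges), then for any constant `Bij > 0`,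
`|Bij * (θ i - θ j)| ≤ Bij * Σ_{(u,v)∈P} f̄ u v / B u v`; in particular,
`M_ij := Bij * Σ_{(u,v)∈P} f̄ u v / B u v` is a valid big-M value: the linearized switching
constraint `|f_ij - Bij (θ i - θ j)| ≤ M_ij` holds whenever `f_ij = 0`. -/
theorem path_bigM_valid {V : Type*} [Fintype V] (G : SimpleGraph V)
    (θ : V → ℝ) (B fbar f : V → V → ℝ) {i j : V}
    (P : G.Walk i j) (hP : P.IsPath)
    (hB : ∀ d ∈ P.darts, 0 < B d.toProd.1 d.toProd.2)
    (hf : ∀ d ∈ P.darts,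
      f d.toProd.1 d.toProd.2 = B d.toProd.1 d.toProd.2 * (θ d.toProd.1 - θ d.toProd.2) ∧
      |f d.toProd.1 d.toProd.2| ≤ fbar d.toProd.1 d.toProd.2)
    (Bij : ℝ) (hBij : 0 < Bij) :
    |Bij * (θ i - θ j)| ≤
      Bij * (P.darts.map
        (fun d => fbar d.toProd.1 d.toProd.2 / B d.toProd.1 d.toProd.2)).sum ∧
    ∀ fij : ℝ, fij = 0 →
      |fij - Bij * (θ i - θ j)| ≤
        Bij * (P.darts.map
          (fun d => fbar d.toProd.1 d.toProd.2 / B d.toProd.1 d.toProd.2)).sum := by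
  have key : |θ i - θ j| ≤
      (P.darts.map (fun d => fbar d.toProd.1 d.toProd.2 / B d.toProd.1 d.toProd.2)).sum := by
    rw [← walk_telescope θ P]
    calc |(P.darts.map (fun d => θ d.toProd.1 - θ d.toProd.2)).sum|
        ≤ (P.darts.map (fun d => |θ d.toProd.1 - θ d.toProd.2|)).sum := by
          induction P.darts with
          | nil => simp
          | cons a l ih =>
            simp only [List.map_cons, List.sum_cons]
            exact (abs_add_le _ _).trans (by linarith [ih])
      _ ≤ _ := by
          apply List.sum_le_sum
          intro e he
          have hBe := hB e he
          have ⟨h1, h2⟩ := hf e he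
          rw [le_div_iff₀ hBe]
          calc |θ e.toProd.1 - θ e.toProd.2| * B e.toProd.1 e.toProd.2
              = |f e.toProd.1 e.toProd.2| := by
                rw [h1, abs_mul, abs_of_pos hBe]; ring
            _ ≤ _ := h2
  have main : |Bij * (θ i - θ j)| ≤
      Bij * (P.darts.map
        (fun d => fbar d.toProd.1 d.toProd.2 / B d.toProd.1 d.toProd.2)).sum := by
    rw [abs_mul, abs_of_pos hBij]
    exact mul_le_mul_of_nonneg_left key hBij.le
  exact ⟨main, fun fij hfij => by simpa [hfij] using main⟩
end

section
/- Let V be a finite type with a simple graph structure, θ : V → ℝ, and B, f̄ : V → V → ℝ with B u v > 0 and f̄ u v ≥ 0 on every edge. Suppose that on every edge (u,v) of the graph there is a flow f u v with f u v = B u v * (θ u − θ v) and |f u v| ≤ f̄ u v (i.e., all edges are on service). Then for any two vertices i and j joined by at least one path, |θ i − θ j| ≤ the minimum over all paths P from i to j of Σ_{(u,v)∈P} f̄ u v / B u v, i.e., the weighted shortest-path distance from i to j with edge weights f̄ u v / B u v. -/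
private lemma walk_bound {V : Type*} (G : SimpleGraph V)
    (θ : V → ℝ) (B fbar f : V → V → ℝ)
    (hB : ∀ u v, G.Adj u v → 0 < B u v)
    (hf : ∀ u v, G.Adj u v → f u v = B u v * (θ u - θ v) ∧ |f u v| ≤ fbar u v) :
    ∀ {i j : V} (w : G.Walk i j),
      |θ i - θ j| ≤
        (w.darts.map (fun d => fbar d.toProd.1 d.toProd.2 / B d.toProd.1 d.toProd.2)).sum := by
  intro i j w
  induction w with
  | nil => simp
  | cons h w ih =>
    rename_i a b c
    simp only [SimpleGraph.Walk.darts_cons, List.map_cons, List.sum_cons]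
    have hstep : |θ a - θ b| ≤ fbar a b / B a b := by
      obtain ⟨h1, h2⟩ := hf a b h
      have hBpos := hB a b h
      rw [le_div_iff₀ hBpos]
      calc |θ a - θ b| * B a b = |B a b * (θ a - θ b)| := by
            rw [abs_mul, abs_of_pos hBpos]; ring
        _ = |f a b| := by rw [h1]
        _ ≤ fbar a b := h2
    calc |θ a - θ c| = |(θ a - θ b) + (θ b - θ c)| := by ring_nf
      _ ≤ |θ a - θ b| + |θ b - θ c| := abs_add_le _ _
      _ ≤ _ := add_le_add hstep ih

/-- In a fixed (fully on-service) network, i.e. when every edge `(u,v)` of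
the simple graph carries a flow `f u v` with `f u v = B u v * (θ u - θ v)` and
`|f u v| ≤ f̄ u v` (with `B u v > 0` and `f̄ u v ≥ 0` on edges), the voltage angle
difference between any two vertices `i` and `j` joined by at least one path is bounded by
the weighted shortest-path distance from `i` to `j`, where the weight of a path `P` is
`Σ_{(u,v)∈P} f̄ u v / B u v`. -/
theorem abs_angle_diff_le_shortest_path {V : Type*} [Fintype V] [DecidableEq V]
    (G : SimpleGraph V) [DecidableRel G.Adj]
    (θ : V → ℝ) (B fbar f : V → V → ℝ)
    (hB : ∀ u v, G.Adj u v → 0 < B u v)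
    (hfbar : ∀ u v, G.Adj u v → 0 ≤ fbar u v)
    (hf : ∀ u v, G.Adj u v → f u v = B u v * (θ u - θ v) ∧ |f u v| ≤ fbar u v)
    (i j : V) (hne : Nonempty (G.Path i j)) :
    |θ i - θ j| ≤
      Finset.univ.inf' (@Finset.univ_nonempty (G.Path i j) _ hne)
        (fun P : G.Path i j =>
          ((P : G.Walk i j).darts.map
            (fun d => fbar d.toProd.1 d.toProd.2 / B d.toProd.1 d.toProd.2)).sum) := by
  apply Finset.le_inf'
  intro P _
  exact walk_bound G θ B fbar f hB hf (P : G.Walk i j)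
end

section
/- Fix a finite simple graph D = (N, E) with an orientation of each edge, a set of generator buses G ⊆ N, demands d : N → ℝ, susceptances B : E → ℝ with B_e > 0, flow capacities f̄ : E → ℝ with f̄_e ≥ 0, and production bounds p^min, p^max : G → ℝ. Assume the graph D is connected. Then for every DC-OTS feasible tuple (p, f, θ, x) there exists a DC-OTS feasible tuple (p, f', θ', x') with the same production vector p, with x'_e ≥ x_e for every edge e, and such that the on-network of x' is connected. -/
/-- A finite simple graph `D = (N, E)` together with an orientation of each edge:
each edge `e` has a source `src e` and target `tgt e`, there are no loops, and distinct
edges have distinct (unordered) endpoint pairs. -/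
structure OrientedGraph (N E : Type*) where
  src : E → N
  tgt : E → N
  loopless : ∀ e, src e ≠ tgt e
  simple : ∀ e e' : E, ({src e, tgt e} : Set N) = {src e', tgt e'} → e = e'

/-- DC-OTS feasibility of a tuple `(p, f, θ, x)`: `x` is 0/1 valued; flow balance holds at
every bus (with production added at generator buses `Gen`); Ohm's law holds on switched-on
edges; flow capacities are respected (and forced to `0` on switched-off edges); and
production bounds hold at every generator. -/
def DCOTSFeasible {N E : Type*} [Fintype E] [DecidableEq N]
    (Gr : OrientedGraph N E) (Gen : Finset N)
    (d : N → ℝ) (B fbar : E → ℝ) (pmin pmax : N → ℝ)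
    (p : N → ℝ) (f : E → ℝ) (θ : N → ℝ) (x : E → ℝ) : Prop :=
  (∀ e, x e = 0 ∨ x e = 1) ∧
  (∀ i, (∑ e, if Gr.tgt e = i then f e else 0) - (∑ e, if Gr.src e = i then f e else 0)
      + (if i ∈ Gen then p i else 0) = d i) ∧
  (∀ e, f e = B e * (θ (Gr.src e) - θ (Gr.tgt e)) * x e) ∧
  (∀ e, -fbar e * x e ≤ f e ∧ f e ≤ fbar e * x e) ∧
  (∀ i ∈ Gen, pmin i ≤ p i ∧ p i ≤ pmax i)

/-- The on-network of `x`: the spanning subgraph of `D` whose edges are those with `x e = 1`. -/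
def onNetwork {N E : Type*} (Gr : OrientedGraph N E) (x : E → ℝ) : SimpleGraph N where
  Adj u v := u ≠ v ∧ ∃ e, x e = 1 ∧
    ((Gr.src e = u ∧ Gr.tgt e = v) ∨ (Gr.src e = v ∧ Gr.tgt e = u))
  symm := by
    constructor
    rintro u v ⟨huv, e, he, h⟩
    exact ⟨huv.symm, e, he, h.symm⟩
  loopless := by
    constructor
    rintro u ⟨hu, _⟩
    exact hu rfl

/-- The simple graph underlying the oriented graph `D`. -/
def OrientedGraph.toSimpleGraph {N E : Type*} (Gr : OrientedGraph N E) : SimpleGraph N where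
  Adj u v := u ≠ v ∧ ∃ e,
    (Gr.src e = u ∧ Gr.tgt e = v) ∨ (Gr.src e = v ∧ Gr.tgt e = u)
  symm := by
    constructor
    rintro u v ⟨huv, e, h⟩
    exact ⟨huv.symm, e, h.symm⟩
  loopless := by
    constructor
    rintro u ⟨hu, _⟩
    exact hu rfl

/-- Along a walk in `G` from a vertex `H`-reachable from `u` to one that is not,
there is a `G`-edge crossing the `H`-reachability boundary. -/
lemma exists_crossing_edge {N : Type*} (G H : SimpleGraph N) (u : N) :
    ∀ {a b : N} (_ : G.Walk a b), H.Reachable u a → ¬ H.Reachable u b →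
      ∃ s t, G.Adj s t ∧ H.Reachable u s ∧ ¬ H.Reachable u t := by
  intro a b w
  induction w with
  | nil => intro h1 h2; exact absurd h1 h2
  | @cons a c b h w ih =>
    intro h1 h2
    by_cases hc : H.Reachable u c
    · exact ih hc h2
    · exact ⟨a, c, h, h1, hc⟩

/-- If `x e = 1` then the endpoints of `e` are adjacent in the on-network. -/
lemma onNetwork_adj_of_on {N E : Type*} (Gr : OrientedGraph N E) (x : E → ℝ) (e : E)
    (he : x e = 1) : (onNetwork Gr x).Adj (Gr.src e) (Gr.tgt e) :=
  ⟨Gr.loopless e, e, he, Or.inl ⟨rfl, rfl⟩⟩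

/-- The key induction: either the on-network is already connected, or we can switch on
one more edge, strictly decreasing the number of switched-off edges. -/
lemma feasible_to_connected_aux {N E : Type*} [Fintype N] [Fintype E] [DecidableEq N]
    [DecidableEq E]
    (Gr : OrientedGraph N E) (Gen : Finset N)
    (d : N → ℝ) (B fbar : E → ℝ) (pmin pmax : N → ℝ)
    (hfbar : ∀ e, 0 ≤ fbar e)
    (hconn : Gr.toSimpleGraph.Connected) (p : N → ℝ) :
    ∀ (n : ℕ) (f : E → ℝ) (θ : N → ℝ) (x : E → ℝ),
      (Finset.univ.filter (fun e => x e = 0)).card = n →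
      DCOTSFeasible Gr Gen d B fbar pmin pmax p f θ x →
      ∃ (f' : E → ℝ) (θ' : N → ℝ) (x' : E → ℝ),
        DCOTSFeasible Gr Gen d B fbar pmin pmax p f' θ' x' ∧
        (∀ e, x e ≤ x' e) ∧
        (onNetwork Gr x').Connected := by
  intro n
  induction n using Nat.strong_induction_on with
  | _ n ih =>
    intro f θ x hcard hfeas
    classical
    by_cases hc : (onNetwork Gr x).Connected
    · exact ⟨f, θ, x, hfeas, fun e => le_refl _, hc⟩
    -- the on-network is not connected: find `u v` not reachable
    have hne : Nonempty N := hconn.nonempty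
    rw [SimpleGraph.connected_iff] at hc
    push_neg at hc
    obtain ⟨u, v, huv⟩ : ∃ u v, ¬ (onNetwork Gr x).Reachable u v := by
      by_contra h
      push_neg at h
      exact (hc (fun a b => h a b)).false hne.some
    obtain ⟨w⟩ := hconn.preconnected u v
    obtain ⟨s, t, hst, hus, hut⟩ :=
      exists_crossing_edge Gr.toSimpleGraph (onNetwork Gr x) u w
        (SimpleGraph.Reachable.refl u) huv
    have hnst : ¬ (onNetwork Gr x).Reachable s t := fun h => hut (hus.trans h)
    obtain ⟨hsne, e0, horient⟩ := hst
    -- `¬ Reachable (tgt e0) (src e0)` in both orientations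
    have hnr : ¬ (onNetwork Gr x).Reachable (Gr.tgt e0) (Gr.src e0) := by
      rcases horient with ⟨h1, h2⟩ | ⟨h1, h2⟩
      · rw [h1, h2]; exact fun h => hnst h.symm
      · rw [h1, h2]; exact hnst
    -- `x e0 = 0`
    have hx0 : x e0 = 0 := by
      rcases hfeas.1 e0 with h | h
      · exact h
      · exfalso
        have hadj := onNetwork_adj_of_on Gr x e0 h
        rcases horient with ⟨h1, h2⟩ | ⟨h1, h2⟩
        · rw [h1, h2] at hadj; exact hnst hadj.reachable
        · rw [h1, h2] at hadj; exact hnst hadj.symm.reachable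
    -- flow is zero on the switched-off edge
    have hf0 : f e0 = 0 := by
      have := hfeas.2.2.1 e0
      rw [hx0, mul_zero] at this; exact this
    -- the new switching vector and shifted angles
    set x' : E → ℝ := Function.update x e0 1 with hx'
    set c : ℝ := θ (Gr.src e0) - θ (Gr.tgt e0) with hcdef
    set θ' : N → ℝ :=
      fun i => if (onNetwork Gr x).Reachable (Gr.tgt e0) i then θ i + c else θ i with hθ'
    have hθt : θ' (Gr.tgt e0) = θ (Gr.src e0) := by
      simp only [hθ', if_pos (SimpleGraph.Reachable.refl _), hcdef]; ring
    have hθs : θ' (Gr.src e0) = θ (Gr.src e0) := by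
      simp only [hθ', if_neg hnr]
    -- angle differences are preserved on switched-on edges
    have hdiff : ∀ e, x e = 1 →
        θ' (Gr.src e) - θ' (Gr.tgt e) = θ (Gr.src e) - θ (Gr.tgt e) := by
      intro e he
      have hadj := onNetwork_adj_of_on Gr x e he
      by_cases hr : (onNetwork Gr x).Reachable (Gr.tgt e0) (Gr.src e)
      · have hr2 : (onNetwork Gr x).Reachable (Gr.tgt e0) (Gr.tgt e) :=
          hr.trans hadj.reachable
        simp only [hθ', if_pos hr, if_pos hr2]; ring
      · have hr2 : ¬ (onNetwork Gr x).Reachable (Gr.tgt e0) (Gr.tgt e) := fun h =>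
          hr (h.trans hadj.symm.reachable)
        simp only [hθ', if_neg hr, if_neg hr2]
    -- feasibility of the modified tuple
    have hfeas' : DCOTSFeasible Gr Gen d B fbar pmin pmax p f θ' x' := by
      obtain ⟨h01, hbal, hohm, hcap, hgen⟩ := hfeas
      refine ⟨?_, hbal, ?_, ?_, hgen⟩
      · intro e
        by_cases he : e = e0
        · subst he; right; simp [hx']
        · simp only [hx', Function.update_of_ne he]; exact h01 e
      · intro e
        by_cases he : e = e0
        · subst he
          simp only [hx', Function.update_self]
          rw [hf0, hθt, hθs]; ring
        · simp only [hx', Function.update_of_ne he]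
          rcases h01 e with h | h
          · rw [hohm e, h]; ring
          · rw [hohm e, h, hdiff e h]
      · intro e
        by_cases he : e = e0
        · subst he
          simp only [hx', Function.update_self, hf0, mul_one]
          exact ⟨neg_nonpos_of_nonneg (hfbar e), hfbar e⟩
        · simp only [hx', Function.update_of_ne he]; exact hcap e
    -- the set of switched-off edges shrinks
    have hsub : (Finset.univ.filter (fun e => x' e = 0)) ⊂
        (Finset.univ.filter (fun e => x e = 0)) := by
      constructor
      · intro e he
        simp only [Finset.mem_filter, Finset.mem_univ, true_and] at he ⊢
        by_cases h : e = e0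
        · subst h; simp [hx'] at he
        · simpa only [hx', Function.update_of_ne h] using he
      · intro hsub'
        have he0 : e0 ∈ Finset.univ.filter (fun e => x e = 0) := by
          simp [hx0]
        have := hsub' he0
        simp [hx'] at this
    have hlt : (Finset.univ.filter (fun e => x' e = 0)).card < n := by
      rw [← hcard]; exact Finset.card_lt_card hsub
    obtain ⟨f'', θ'', x'', hfeas'', hle'', hconn''⟩ :=
      ih _ hlt f θ' x' rfl hfeas'
    refine ⟨f'', θ'', x'', hfeas'', fun e => ?_, hconn''⟩
    refine le_trans ?_ (hle'' e)
    by_cases h : e = e0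
    · subst h; simp [hx', hx0]
    · simp [hx', Function.update_of_ne h]

/-- Suppose the graph `D` is connected. Then every DC-OTS feasible tuple
`(p, f, θ, x)` can be modified, keeping the production vector `p` and switching on
additional edges only (`x e ≤ x' e` for all `e`), into a DC-OTS feasible tuple
`(p, f', θ', x')` whose on-network is connected. -/
theorem feasible_to_connected_onNetwork {N E : Type*} [Fintype N] [Fintype E] [DecidableEq N]
    (Gr : OrientedGraph N E) (Gen : Finset N)
    (d : N → ℝ) (B fbar : E → ℝ) (pmin pmax : N → ℝ)
    (hB : ∀ e, 0 < B e) (hfbar : ∀ e, 0 ≤ fbar e)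
    (hconn : Gr.toSimpleGraph.Connected)
    (p : N → ℝ) (f : E → ℝ) (θ : N → ℝ) (x : E → ℝ)
    (hfeas : DCOTSFeasible Gr Gen d B fbar pmin pmax p f θ x) :
    ∃ (f' : E → ℝ) (θ' : N → ℝ) (x' : E → ℝ),
      DCOTSFeasible Gr Gen d B fbar pmin pmax p f' θ' x' ∧
      (∀ e, x e ≤ x' e) ∧
      (onNetwork Gr x').Connected := by
  classical
  exact feasible_to_connected_aux Gr Gen d B fbar pmin pmax hfbar hconn p
    (Finset.univ.filter (fun e => x e = 0)).card f θ x rfl hfeas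
end

section
/- Fix a finite simple graph D = (N, E) with an orientation of each edge, a set of generator buses G ⊆ N, demands d : N → ℝ, susceptances B : E → ℝ with B_e > 0, flow capacities f̄ : E → ℝ with f̄_e ≥ 0, production bounds p^min, p^max : G → ℝ, and marginal costs c : G → ℝ. Assume the graph D is connected. If (p, f, θ, x) is an optimal solution of the DC-OTS problem, i.e., it is DC-OTS feasible and Σ_{i∈G} c_i p_i ≤ Σ_{i∈G} c_i p'_i for every DC-OTS feasible (p', f', θ', x'), then there exists an optimal solution (p, f'', θ'', x'') of the DC-OTS problem whose on-network is connected. -/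
open Classical in
/-- Key step: if the on-network of a feasible solution is not connected, we can switch on
one more line (crossing two components), adjusting angles, keeping flows and production. -/
lemma DCOTS_step {N E : Type*} [Fintype N] [Fintype E] [DecidableEq N] [DecidableEq E]
    (Gr : OrientedGraph N E) (Gen : Finset N)
    (d : N → ℝ) (B fbar : E → ℝ) (pmin pmax : N → ℝ)
    (hfbar : ∀ e, 0 ≤ fbar e)
    (hconn : Gr.toSimpleGraph.Connected)
    (p : N → ℝ) (f : E → ℝ) (θ : N → ℝ) (x : E → ℝ)
    (hfeas : DCOTSFeasible Gr Gen d B fbar pmin pmax p f θ x)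
    (hnc : ¬ (onNetwork Gr x).Connected) :
    ∃ (e0 : E) (θ' : N → ℝ), x e0 = 0 ∧
      DCOTSFeasible Gr Gen d B fbar pmin pmax p f θ' (Function.update x e0 1) := by
  classical
  obtain ⟨hx01, hbal, hohm, hcap, hbnd⟩ := hfeas
  haveI : Nonempty N := hconn.nonempty
  -- find two vertices not reachable in the on-network
  have hpre : ¬ (onNetwork Gr x).Preconnected := fun hp => hnc ⟨hp⟩
  rw [SimpleGraph.Preconnected] at hpre
  push_neg at hpre
  obtain ⟨u, w, huw⟩ := hpre
  set G0 := onNetwork Gr x with hG0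
  -- adjacency in the on-network from x e = 1
  have hadj : ∀ e, x e = 1 → G0.Adj (Gr.src e) (Gr.tgt e) := fun e he =>
    ⟨Gr.loopless e, e, he, Or.inl ⟨rfl, rfl⟩⟩
  -- find a boundary dart of a D-walk from u to w
  obtain ⟨wlk⟩ := hconn.preconnected u w
  have huC : u ∈ {i | G0.Reachable u i} := SimpleGraph.Reachable.refl u
  have hwC : w ∉ {i | G0.Reachable u i} := huw
  obtain ⟨dt, -, haC, hbC⟩ := wlk.exists_boundary_dart _ huC hwC
  obtain ⟨hne, e0, hor⟩ := dt.adj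
  -- the endpoints of e0 are not reachable from each other in the on-network
  have hnr : ¬ G0.Reachable (Gr.src e0) (Gr.tgt e0) := by
    rcases hor with ⟨hs, ht⟩ | ⟨hs, ht⟩
    · rw [hs, ht]; exact fun h => hbC (haC.trans h)
    · rw [hs, ht]; exact fun h => hbC (haC.trans h.symm)
  have hx0 : x e0 = 0 := by
    rcases hx01 e0 with h | h
    · exact h
    · exact absurd (hadj e0 h).reachable hnr
  have hf0 : f e0 = 0 := by
    have h1 := (hcap e0).1
    have h2 := (hcap e0).2
    rw [hx0] at h1 h2
    nlinarith
  -- the angle shift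
  set δ : ℝ := θ (Gr.tgt e0) - θ (Gr.src e0) with hδ
  refine ⟨e0, fun i => if G0.Reachable (Gr.src e0) i then θ i + δ else θ i, hx0,
    ?_, hbal, ?_, ?_, hbnd⟩
  · intro e
    by_cases h : e = e0
    · subst h; right; simp
    · rw [Function.update_of_ne h]; exact hx01 e
  · -- Ohm's law
    intro e
    by_cases h : e = e0
    · subst h
      have hs : G0.Reachable (Gr.src e) (Gr.src e) := SimpleGraph.Reachable.refl _
      simp only [if_pos hs, if_neg hnr, Function.update_self]
      rw [hf0]; ring
    · rw [Function.update_of_ne h]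
      rcases hx01 e with hxe | hxe
      · have : f e = 0 := by have := hohm e; rw [hxe] at this; simpa using this
        rw [this, hxe]; ring
      · have hiff : G0.Reachable (Gr.src e0) (Gr.src e) ↔
            G0.Reachable (Gr.src e0) (Gr.tgt e) := by
          have hr := (hadj e hxe).reachable
          exact ⟨fun h' => h'.trans hr, fun h' => h'.trans hr.symm⟩
        by_cases hc : G0.Reachable (Gr.src e0) (Gr.src e)
        · beta_reduce
          rw [if_pos hc, if_pos (hiff.mp hc)]
          have := hohm e; rw [this]; ring
        · beta_reduce
          rw [if_neg hc, if_neg (fun h' => hc (hiff.mpr h'))]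
          exact hohm e
  · -- capacities
    intro e
    by_cases h : e = e0
    · subst h
      rw [Function.update_self, hf0, mul_one, mul_one]
      exact ⟨neg_nonpos_of_nonneg (hfbar e) |>.trans_eq rfl, hfbar e⟩
    · rw [Function.update_of_ne h]; exact hcap e

/-- Iterating the key step: any feasible solution can be turned into one with the same
production and a connected on-network. -/
lemma DCOTS_connectify {N E : Type*} [Fintype N] [Fintype E] [DecidableEq N] [DecidableEq E]
    (Gr : OrientedGraph N E) (Gen : Finset N)
    (d : N → ℝ) (B fbar : E → ℝ) (pmin pmax : N → ℝ)
    (hfbar : ∀ e, 0 ≤ fbar e)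
    (hconn : Gr.toSimpleGraph.Connected) :
    ∀ (k : ℕ) (p : N → ℝ) (f : E → ℝ) (θ : N → ℝ) (x : E → ℝ),
      DCOTSFeasible Gr Gen d B fbar pmin pmax p f θ x →
      (Finset.univ.filter (fun e => x e = 0)).card ≤ k →
      ∃ (f'' : E → ℝ) (θ'' : N → ℝ) (x'' : E → ℝ),
        DCOTSFeasible Gr Gen d B fbar pmin pmax p f'' θ'' x'' ∧
        (onNetwork Gr x'').Connected := by
  intro k
  induction k with
  | zero =>
    intro p f θ x hfeas hcard
    by_cases hc : (onNetwork Gr x).Connected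
    · exact ⟨f, θ, x, hfeas, hc⟩
    · obtain ⟨e0, θ', hx0, -⟩ :=
        DCOTS_step Gr Gen d B fbar pmin pmax hfbar hconn p f θ x hfeas hc
      exfalso
      have : e0 ∈ Finset.univ.filter (fun e => x e = 0) := by
        simp [hx0]
      have := Finset.card_pos.mpr ⟨e0, this⟩
      omega
  | succ k ih =>
    intro p f θ x hfeas hcard
    by_cases hc : (onNetwork Gr x).Connected
    · exact ⟨f, θ, x, hfeas, hc⟩
    · obtain ⟨e0, θ', hx0, hfeas'⟩ :=
        DCOTS_step Gr Gen d B fbar pmin pmax hfbar hconn p f θ x hfeas hc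
      apply ih p f θ' (Function.update x e0 1) hfeas'
      have hss : Finset.univ.filter (fun e => Function.update x e0 1 e = 0) ⊂
          Finset.univ.filter (fun e => x e = 0) := by
        constructor
        · intro e he
          simp only [Finset.mem_filter, Finset.mem_univ, true_and] at he ⊢
          by_cases h : e = e0
          · subst h; rw [Function.update_self] at he; norm_num at he
          · rwa [Function.update_of_ne h] at he
        · intro hsub
          have he0 : e0 ∈ Finset.univ.filter (fun e => x e = 0) := by simp [hx0]
          have := hsub he0
          simp only [Finset.mem_filter, Finset.mem_univ, true_and,
            Function.update_self] at this
          norm_num at this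
      have := Finset.card_lt_card hss
      omega

/-- Proposition 1 of the paper. Suppose the graph `D` is connected. If
`(p, f, θ, x)` is an optimal solution of the DC-OTS problem (feasible and of minimal
production cost `Σ_{i∈Gen} c i * p i` among all feasible tuples), then there exists an
optimal solution `(p, f'', θ'', x'')` of the DC-OTS problem whose on-network is connected. -/
theorem exists_optimal_connected_onNetwork {N E : Type*} [Fintype N] [Fintype E]
    [DecidableEq N]
    (Gr : OrientedGraph N E) (Gen : Finset N)
    (d : N → ℝ) (B fbar : E → ℝ) (pmin pmax : N → ℝ) (c : N → ℝ)
    (hB : ∀ e, 0 < B e) (hfbar : ∀ e, 0 ≤ fbar e)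
    (hconn : Gr.toSimpleGraph.Connected)
    (p : N → ℝ) (f : E → ℝ) (θ : N → ℝ) (x : E → ℝ)
    (hfeas : DCOTSFeasible Gr Gen d B fbar pmin pmax p f θ x)
    (hopt : ∀ (p' : N → ℝ) (f' : E → ℝ) (θ' : N → ℝ) (x' : E → ℝ),
      DCOTSFeasible Gr Gen d B fbar pmin pmax p' f' θ' x' →
      ∑ i ∈ Gen, c i * p i ≤ ∑ i ∈ Gen, c i * p' i) :
    ∃ (f'' : E → ℝ) (θ'' : N → ℝ) (x'' : E → ℝ),
      DCOTSFeasible Gr Gen d B fbar pmin pmax p f'' θ'' x'' ∧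
      (∀ (p' : N → ℝ) (f' : E → ℝ) (θ' : N → ℝ) (x' : E → ℝ),
        DCOTSFeasible Gr Gen d B fbar pmin pmax p' f' θ' x' →
        ∑ i ∈ Gen, c i * p i ≤ ∑ i ∈ Gen, c i * p' i) ∧
      (onNetwork Gr x'').Connected := by
  classical
  obtain ⟨f'', θ'', x'', hfeas'', hc''⟩ :=
    DCOTS_connectify Gr Gen d B fbar pmin pmax hfbar hconn
      (Finset.univ.filter (fun e => x e = 0)).card p f θ x hfeas le_rfl
  exact ⟨f'', θ'', x'', hfeas'', hopt, hc''⟩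
end

section
/- Fix a finite simple graph D = (N, E) with an orientation of each edge, a set of generator buses G ⊆ N, demands d : N → ℝ, susceptances B : E → ℝ with B_e > 0, flow capacities f̄ : E → ℝ with f̄_e ≥ 0, and production bounds p^min, p^max : G → ℝ. Let (p, f, θ, x) be a DC-OTS feasible tuple whose on-network is connected, and let (i, j) be any edge of D. Then B_{ij} * |θ_i − θ_j| ≤ B_{ij} * max over all elementary paths P from i to j in D of Σ_{e∈P} f̄_e / B_e. Consequently the longest-path big-M value M_{ij} := B_{ij} times the maximum weight of an elementary path from i to j in D satisfies the linearized switching constraint |f_{ij} − B_{ij}(θ_i − θ_j)| ≤ M_{ij} whenever x_{ij} = 0 (so that f_{ij} = 0). -/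
/-- The weight `f̄ e / B e` of the (unique, by simplicity) edge of `D` with unordered
endpoints `{u, v}`, and `0` if there is no such edge. -/
noncomputable def pairWeight {N E : Type*} [Fintype E] [DecidableEq N]
    (Gr : OrientedGraph N E) (B fbar : E → ℝ) (u v : N) : ℝ :=
  ∑ e, if (Gr.src e = u ∧ Gr.tgt e = v) ∨ (Gr.src e = v ∧ Gr.tgt e = u)
    then fbar e / B e else 0

/-- The weight of a walk in the graph underlying `D`: the sum of `f̄ e / B e` over its
traversed edges. -/
noncomputable def walkWeight {N E : Type*} [Fintype E] [DecidableEq N]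
    (Gr : OrientedGraph N E) (B fbar : E → ℝ) {u v : N}
    (W : Gr.toSimpleGraph.Walk u v) : ℝ :=
  (W.darts.map (fun d => pairWeight Gr B fbar d.toProd.1 d.toProd.2)).sum

section Aux
open SimpleGraph

variable {N E : Type*} [Fintype E] [DecidableEq N]

lemma pairWeight_eq (Gr : OrientedGraph N E) (B fbar : E → ℝ) {u v : N} {e : E}
    (he : (Gr.src e = u ∧ Gr.tgt e = v) ∨ (Gr.src e = v ∧ Gr.tgt e = u)) :
    pairWeight Gr B fbar u v = fbar e / B e := by
  unfold pairWeight
  rw [Finset.sum_eq_single_of_mem e (Finset.mem_univ e)]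
  · simp [he]
  · intro e' _ hne
    rw [if_neg]
    intro he'
    apply hne
    apply Gr.simple
    have h1 : ({Gr.src e', Gr.tgt e'} : Set N) = {u, v} := by
      rcases he' with ⟨h1, h2⟩ | ⟨h1, h2⟩ <;> subst h1 <;> subst h2
      · rfl
      · exact Set.pair_comm _ _
    have h2 : ({Gr.src e, Gr.tgt e} : Set N) = {u, v} := by
      rcases he with ⟨h1, h2⟩ | ⟨h1, h2⟩ <;> subst h1 <;> subst h2
      · rfl
      · exact Set.pair_comm _ _
    rw [h1, h2]

lemma adj_bound (Gr : OrientedGraph N E) (B fbar : E → ℝ)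
    (hB : ∀ e, 0 < B e) (f : E → ℝ) (θ : N → ℝ) (x : E → ℝ)
    (hohm : ∀ e, f e = B e * (θ (Gr.src e) - θ (Gr.tgt e)) * x e)
    (hcap : ∀ e, -fbar e * x e ≤ f e ∧ f e ≤ fbar e * x e)
    {u v : N} (h : (onNetwork Gr x).Adj u v) :
    |θ u - θ v| ≤ pairWeight Gr B fbar u v := by
  obtain ⟨hne, e, hx, he⟩ := h
  rw [pairWeight_eq Gr B fbar he]
  have hcape := hcap e
  have h1 : |f e| ≤ fbar e := by
    rw [abs_le]; rw [hx] at hcape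
    constructor <;> nlinarith [hcape.1, hcape.2]
  have h2 : f e = B e * (θ (Gr.src e) - θ (Gr.tgt e)) := by
    rw [hohm e, hx]; ring
  have h3 : |θ (Gr.src e) - θ (Gr.tgt e)| ≤ fbar e / B e := by
    rw [le_div_iff₀ (hB e)]
    calc |θ (Gr.src e) - θ (Gr.tgt e)| * B e = |f e| := by
          rw [h2, abs_mul, abs_of_pos (hB e)]; ring
      _ ≤ fbar e := h1
  rcases he with ⟨h4, h5⟩ | ⟨h4, h5⟩ <;> subst h4 <;> subst h5
  · exact h3
  · rwa [abs_sub_comm]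

lemma walk_bound_s7 (Gr : OrientedGraph N E) (B fbar : E → ℝ)
    (hB : ∀ e, 0 < B e) (f : E → ℝ) (θ : N → ℝ) (x : E → ℝ)
    (hohm : ∀ e, f e = B e * (θ (Gr.src e) - θ (Gr.tgt e)) * x e)
    (hcap : ∀ e, -fbar e * x e ≤ f e ∧ f e ≤ fbar e * x e)
    {u v : N} (W : (onNetwork Gr x).Walk u v) :
    |θ u - θ v| ≤ (W.darts.map (fun d => pairWeight Gr B fbar d.toProd.1 d.toProd.2)).sum := by
  induction W with
  | nil => simp
  | cons h W ih =>
    rename_i a b c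
    simp only [SimpleGraph.Walk.darts_cons, List.map_cons, List.sum_cons]
    calc |θ a - θ c| ≤ |θ a - θ b| + |θ b - θ c| := abs_sub_le _ _ _
      _ ≤ _ := add_le_add (adj_bound Gr B fbar hB f θ x hohm hcap h) ih

lemma walkWeight_mapLe (Gr : OrientedGraph N E) (B fbar : E → ℝ) {u v : N}
    (h : onNetwork Gr (x := fun _ => (0:ℝ)) ≤ Gr.toSimpleGraph) : True := trivial

end Aux

lemma weight_mapLe {N E : Type*} [Fintype E] [DecidableEq N]
    (Gr : OrientedGraph N E) (B fbar : E → ℝ) (x : E → ℝ)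
    (hle : onNetwork Gr x ≤ Gr.toSimpleGraph) {u v : N}
    (W : (onNetwork Gr x).Walk u v) :
    walkWeight Gr B fbar (W.mapLe hle) =
      (W.darts.map (fun d => pairWeight Gr B fbar d.toProd.1 d.toProd.2)).sum := by
  induction W with
  | nil => simp [walkWeight]
  | cons h W' ih =>
    simp only [walkWeight, SimpleGraph.Walk.mapLe, SimpleGraph.Walk.map_cons,
      SimpleGraph.Hom.ofLE_apply,
      SimpleGraph.Walk.darts_cons, List.map_cons, List.sum_cons] at ih ⊢
    rw [ih]

/-- If `(p, f, θ, x)` is DC-OTS feasible with a connected on-network, then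
for any edge `e₀ = (i, j)` of `D`, `B e₀ * |θ i - θ j|` is at most `B e₀` times the maximum
weight of an elementary path from `i` to `j` in `D`; consequently, the longest-path big-M
value `M_{ij} := B e₀ *` (maximum weight of an elementary path from `i` to `j`) satisfies
the linearized switching constraint `|f e₀ - B e₀ (θ i - θ j)| ≤ M_{ij}` whenever
`x e₀ = 0`. -/
theorem longestPath_bigM_valid {N E : Type*} [Fintype N] [Fintype E] [DecidableEq N]
    (Gr : OrientedGraph N E) [DecidableRel Gr.toSimpleGraph.Adj]
    (Gen : Finset N)
    (d : N → ℝ) (B fbar : E → ℝ) (pmin pmax : N → ℝ)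
    (hB : ∀ e, 0 < B e) (hfbar : ∀ e, 0 ≤ fbar e)
    (p : N → ℝ) (f : E → ℝ) (θ : N → ℝ) (x : E → ℝ)
    (hfeas : DCOTSFeasible Gr Gen d B fbar pmin pmax p f θ x)
    (hconn : (onNetwork Gr x).Connected)
    (e₀ : E) :
    B e₀ * |θ (Gr.src e₀) - θ (Gr.tgt e₀)| ≤
      B e₀ * Finset.univ.sup'
        (@Finset.univ_nonempty (Gr.toSimpleGraph.Path (Gr.src e₀) (Gr.tgt e₀)) _
          ⟨SimpleGraph.Path.singleton ⟨Gr.loopless e₀, e₀, Or.inl ⟨rfl, rfl⟩⟩⟩)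
        (fun P : Gr.toSimpleGraph.Path (Gr.src e₀) (Gr.tgt e₀) =>
          walkWeight Gr B fbar (P : Gr.toSimpleGraph.Walk (Gr.src e₀) (Gr.tgt e₀))) ∧
    (x e₀ = 0 →
      |f e₀ - B e₀ * (θ (Gr.src e₀) - θ (Gr.tgt e₀))| ≤
        B e₀ * Finset.univ.sup'
          (@Finset.univ_nonempty (Gr.toSimpleGraph.Path (Gr.src e₀) (Gr.tgt e₀)) _
            ⟨SimpleGraph.Path.singleton ⟨Gr.loopless e₀, e₀, Or.inl ⟨rfl, rfl⟩⟩⟩)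
          (fun P : Gr.toSimpleGraph.Path (Gr.src e₀) (Gr.tgt e₀) =>
            walkWeight Gr B fbar (P : Gr.toSimpleGraph.Walk (Gr.src e₀) (Gr.tgt e₀)))) := by
  obtain ⟨hx01, hbal, hohm, hcap, hgen⟩ := hfeas
  have hle : onNetwork Gr x ≤ Gr.toSimpleGraph := by
    rintro u v ⟨hne, e, _, he⟩
    exact ⟨hne, e, he⟩
  obtain ⟨W⟩ := hconn.preconnected (Gr.src e₀) (Gr.tgt e₀)
  have P0 : (onNetwork Gr x).Path (Gr.src e₀) (Gr.tgt e₀) := W.toPath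
  have hb : |θ (Gr.src e₀) - θ (Gr.tgt e₀)| ≤
      ((P0 : (onNetwork Gr x).Walk (Gr.src e₀) (Gr.tgt e₀)).darts.map
        (fun d => pairWeight Gr B fbar d.toProd.1 d.toProd.2)).sum :=
    walk_bound_s7 Gr B fbar hB f θ x hohm hcap _
  have P : Gr.toSimpleGraph.Path (Gr.src e₀) (Gr.tgt e₀) :=
    ⟨(P0 : (onNetwork Gr x).Walk (Gr.src e₀) (Gr.tgt e₀)).mapLe hle, P0.prop.mapLe hle⟩
  have hmain : |θ (Gr.src e₀) - θ (Gr.tgt e₀)| ≤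
      Finset.univ.sup'
        (@Finset.univ_nonempty (Gr.toSimpleGraph.Path (Gr.src e₀) (Gr.tgt e₀)) _
          ⟨SimpleGraph.Path.singleton ⟨Gr.loopless e₀, e₀, Or.inl ⟨rfl, rfl⟩⟩⟩)
        (fun P : Gr.toSimpleGraph.Path (Gr.src e₀) (Gr.tgt e₀) =>
          walkWeight Gr B fbar (P : Gr.toSimpleGraph.Walk (Gr.src e₀) (Gr.tgt e₀))) := by
    calc |θ (Gr.src e₀) - θ (Gr.tgt e₀)| ≤ _ := hb
      _ = walkWeight Gr B fbar
            ((⟨(P0 : (onNetwork Gr x).Walk (Gr.src e₀) (Gr.tgt e₀)).mapLe hle,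
              P0.prop.mapLe hle⟩ : Gr.toSimpleGraph.Path (Gr.src e₀) (Gr.tgt e₀)) :
              Gr.toSimpleGraph.Walk (Gr.src e₀) (Gr.tgt e₀)) :=
        (weight_mapLe Gr B fbar x hle _).symm
      _ ≤ _ := Finset.le_sup'
          (fun P : Gr.toSimpleGraph.Path (Gr.src e₀) (Gr.tgt e₀) =>
            walkWeight Gr B fbar (P : Gr.toSimpleGraph.Walk (Gr.src e₀) (Gr.tgt e₀)))
          (Finset.mem_univ _)
  have h1 := mul_le_mul_of_nonneg_left hmain (hB e₀).le
  refine ⟨h1, fun hx0 => ?_⟩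
  have hf0 : f e₀ = 0 := by rw [hohm e₀, hx0, mul_zero]
  rw [hf0, zero_sub, abs_neg, abs_mul, abs_of_pos (hB e₀)]
  exact h1
end
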